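/- Assume additionally that ∇f is ℓ-Lipschitz continuous for some ℓ > 0, that α > 3 and 1/2 > θ > 1/(α−1). Let (x,λ) be a solution of (PD-AVD) and (x*,λ*) a primal-dual optimal solution. Define φ(t) := (1/2)‖(x(t),λ(t)) − (x*,λ*)‖² and W(t) := L_β(x(t),λ*) − L_β(x*,λ(t)) + (1/2)‖(ẋ(t),λ̇(t))‖². Then for every t ≥ t₀: φ''(t) + (α/t)·φ'(t) + θt·W'(t) + (1/(2ℓ))‖∇f(x(t)) − ∇f(x*)‖² + (β/2)‖Ax(t) − b‖² ≤ 0. -/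

import Mathlib

/-!
Differentiating `φ` and `W` and eliminating `ẍ` and `λ̈` with (PD-AVD), all terms coupling
`x` and `λ` through `A` cancel, because the same factor `θ t` multiplies `λ̇` in the first
equation and `ẋ` in the second. What remains is
`(1 - θα) ‖(ẋ, λ̇)‖² - ⟪∇f(x) - ∇f(x*), x - x*⟫ - β ‖Ax - b‖²`.
The first term is nonpositive since `θ > 1/(α - 1)` forces `θα ≥ 1`, and the middle term is
bounded by `-(1/ℓ) ‖∇f(x) - ∇f(x*)‖²` by the Baillon–Haddad cocoercivity of the gradient of a
convex function with `ℓ`-Lipschitz gradient, which follows from the descent lemma.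
-/

open Set MeasureTheory Filter Topology Asymptotics
open scoped RealInnerProductSpace ENNReal

/-- The augmented Lagrangian `L_β(x,λ) = f(x) + ⟪λ, Ax − b⟫ + (β/2)‖Ax − b‖²`. -/
noncomputable def augLagrangian {X Y : Type*}
    [NormedAddCommGroup X] [InnerProductSpace ℝ X]
    [NormedAddCommGroup Y] [InnerProductSpace ℝ Y]
    (f : X → ℝ) (A : X →L[ℝ] Y) (b : Y) (β : ℝ) (u : X) (μ : Y) : ℝ :=
  f u + ⟪μ, A u - b⟫ + β / 2 * ‖A u - b‖ ^ 2

/-- The energy function `E_{z,μ}(t)` associated to a trajectory `(x,λ)` with velocities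
`(x',λ')`, where the product norm on `X × Y` is the Hilbert norm
`‖(u,v)‖² = ‖u‖² + ‖v‖²` and `ξ = θα − θ − 1`. -/
noncomputable def pdEnergy {X Y : Type*}
    [NormedAddCommGroup X] [InnerProductSpace ℝ X]
    [NormedAddCommGroup Y] [InnerProductSpace ℝ Y]
    (f : X → ℝ) (A : X →L[ℝ] Y) (b : Y) (α β θ : ℝ)
    (x : ℝ → X) (x' : ℝ → X) (l : ℝ → Y) (l' : ℝ → Y)
    (z : X) (μ : Y) (t : ℝ) : ℝ :=
  θ ^ 2 * t ^ 2 *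
      (augLagrangian f A b β (x t) μ - augLagrangian f A b β z (l t))
    + 1 / 2 * (‖x t - z + (θ * t) • x' t‖ ^ 2 + ‖l t - μ + (θ * t) • l' t‖ ^ 2)
    + (θ * α - θ - 1) / 2 * (‖x t - z‖ ^ 2 + ‖l t - μ‖ ^ 2)

open scoped InnerProduct

section SmoothConvex

variable {E : Type*} [NormedAddCommGroup E] [InnerProductSpace ℝ E] [CompleteSpace E]

theorem HasGradientAt.comp_hasDerivAt {f : E → ℝ} {g : E} {γ : ℝ → E} {γ' : E} {t : ℝ}
    (hf : HasGradientAt f g (γ t)) (hγ : HasDerivAt γ γ' t) :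
    HasDerivAt (fun s => f (γ s)) ⟪g, γ'⟫ t := by
  have h := hf.hasFDerivAt.comp_hasDerivAt t hγ
  simp only [InnerProductSpace.toDual_apply_apply] at h
  exact h

theorem ConvexOn.add_inner_le_of_hasGradientAt {f : E → ℝ} {g u : E}
    (hf : ConvexOn ℝ univ f) (hg : HasGradientAt f g u) (v : E) :
    f u + ⟪g, v - u⟫ ≤ f v := by
  have hφ : ConvexOn ℝ univ (fun s => f (AffineMap.lineMap (k := ℝ) u v s)) := by
    have h := hf.comp_affineMap (AffineMap.lineMap (k := ℝ) u v)
    rw [preimage_univ] at h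
    exact h
  have hderiv : HasDerivAt (fun s => f (AffineMap.lineMap (k := ℝ) u v s)) ⟪g, v - u⟫ 0 :=
    HasGradientAt.comp_hasDerivAt (by simpa using hg) AffineMap.hasDerivAt_lineMap
  have := hφ.le_slope_of_hasDerivAt (mem_univ 0) (mem_univ 1) one_pos hderiv
  simp only [slope_def_field, AffineMap.lineMap_apply_one, AffineMap.lineMap_apply_zero, sub_zero,
    div_one] at this
  linarith

theorem descent_lemma {f : E → ℝ} {g : E → E} (hg : ∀ u, HasGradientAt f (g u) u)
    {ℓ : NNReal} (hlip : LipschitzWith ℓ g) (u v : E) :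
    f v ≤ f u + ⟪g u, v - u⟫ + ℓ / 2 * ‖v - u‖ ^ 2 := by
  set γ := AffineMap.lineMap (k := ℝ) u v
  set k : ℝ → ℝ := fun s => f (γ s) - s * ⟪g u, v - u⟫ - ℓ / 2 * ‖v - u‖ ^ 2 * s ^ 2
  have hk : ∀ s, HasDerivAt k
      (⟪g (γ s), v - u⟫ - ⟪g u, v - u⟫ - ℓ / 2 * ‖v - u‖ ^ 2 * (2 * s)) s := fun s =>
    (((hg (γ s)).comp_hasDerivAt AffineMap.hasDerivAt_lineMap).sub
      ((hasDerivAt_id s).mul_const _ |>.congr_deriv (one_mul _))).sub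
      ((hasDerivAt_pow 2 s).const_mul _ |>.congr_deriv (by ring))
  have hanti : AntitoneOn k (Icc 0 1) := by
    refine antitoneOn_of_deriv_nonpos (convex_Icc 0 1)
      (fun s _ => (hk s).continuousAt.continuousWithinAt)
      (fun s _ => (hk s).differentiableAt.differentiableWithinAt) fun s hs => ?_
    rw [interior_Icc] at hs
    have hgs : ‖g (γ s) - g u‖ ≤ ℓ * (s * ‖v - u‖) := by
      have hdist : dist (γ s) u = s * ‖v - u‖ := by
        rw [dist_lineMap_left, Real.norm_of_nonneg hs.1.le, dist_eq_norm']
      simpa [hdist, ← dist_eq_norm] using hlip.dist_le_mul (γ s) u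
    have := real_inner_le_norm (g (γ s) - g u) (v - u)
    rw [inner_sub_left] at this
    rw [(hk s).deriv]
    nlinarith [norm_nonneg (v - u)]
  have := hanti (left_mem_Icc.2 zero_le_one) (right_mem_Icc.2 zero_le_one) zero_le_one
  simp only [k, γ, AffineMap.lineMap_apply_zero, AffineMap.lineMap_apply_one] at this
  linarith

theorem ConvexOn.add_inner_add_norm_sq_le {f : E → ℝ} {g : E → E} (hf : ConvexOn ℝ univ f)
    (hg : ∀ u, HasGradientAt f (g u) u) {ℓ : NNReal} (hℓ : 0 < ℓ) (hlip : LipschitzWith ℓ g)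
    (u v : E) :
    f u + ⟪g u, v - u⟫ + 1 / (2 * ℓ) * ‖g v - g u‖ ^ 2 ≤ f v := by
  have hℓ' : (0 : ℝ) < ℓ := hℓ
  set δ := g v - g u
  -- `w` is the gradient step from `v`, the point where the descent bound is tightest
  set w := v - (ℓ : ℝ)⁻¹ • δ with hw
  have hconv := hf.add_inner_le_of_hasGradientAt (hg u) w
  have hdesc := descent_lemma hg hlip v w
  have hwu : w - u = (v - u) - (ℓ : ℝ)⁻¹ • δ := by rw [hw]; abel
  have hwv : w - v = -((ℓ : ℝ)⁻¹ • δ) := sub_sub_cancel_left _ _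
  rw [hwu, inner_sub_right, real_inner_smul_right] at hconv
  rw [hwv, inner_neg_right, real_inner_smul_right, norm_neg, norm_smul, mul_pow,
    Real.norm_of_nonneg (inv_nonneg.2 hℓ'.le)] at hdesc
  have hδ : (ℓ : ℝ)⁻¹ * ⟪g v, δ⟫ - (ℓ : ℝ)⁻¹ * ⟪g u, δ⟫ = (ℓ : ℝ)⁻¹ * ‖δ‖ ^ 2 := by
    rw [← mul_sub, ← inner_sub_left, real_inner_self_eq_norm_sq]
  have hcoef : (ℓ : ℝ) / 2 * ((ℓ : ℝ)⁻¹ ^ 2 * ‖δ‖ ^ 2)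
      = (ℓ : ℝ)⁻¹ * ‖δ‖ ^ 2 - 1 / (2 * ℓ) * ‖δ‖ ^ 2 := by
    field_simp
    ring
  linarith

theorem ConvexOn.inv_mul_norm_sq_le_inner_of_lipschitzWith {f : E → ℝ} {g : E → E}
    (hf : ConvexOn ℝ univ f) (hg : ∀ u, HasGradientAt f (g u) u) {ℓ : NNReal} (hℓ : 0 < ℓ)
    (hlip : LipschitzWith ℓ g) (u v : E) :
    (ℓ : ℝ)⁻¹ * ‖g u - g v‖ ^ 2 ≤ ⟪g u - g v, u - v⟫ := by
  have huv := hf.add_inner_add_norm_sq_le hg hℓ hlip u v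
  have hvu := hf.add_inner_add_norm_sq_le hg hℓ hlip v u
  have hinner : ⟪g u - g v, u - v⟫ = -⟪g u, v - u⟫ - ⟪g v, u - v⟫ := by
    rw [inner_sub_left, ← inner_neg_right, neg_sub]
  have hhalf : 1 / (2 * (ℓ : ℝ)) * ‖g v - g u‖ ^ 2 + 1 / (2 * ℓ) * ‖g u - g v‖ ^ 2
      = (ℓ : ℝ)⁻¹ * ‖g u - g v‖ ^ 2 := by
    rw [norm_sub_rev]; ring
  linarith

end SmoothConvex

theorem HasDerivAt.unique_of_eqOn_Ici {F : Type*} [NormedAddCommGroup F] [NormedSpace ℝ F]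
    {f g : ℝ → F} {f' g' : F} {a t : ℝ} (hf : HasDerivAt f f' t) (hg : HasDerivAt g g' t)
    (hfg : EqOn f g (Ici a)) (ht : t ∈ Ici a) : f' = g' :=
  (uniqueDiffOn_Ici a t ht).eq_deriv _
    (hf.hasDerivWithinAt.congr_of_mem (fun _ hs => (hfg hs).symm) ht) hg.hasDerivWithinAt

section PrimalDual

variable {X Y : Type*} [NormedAddCommGroup X] [InnerProductSpace ℝ X]
  [NormedAddCommGroup Y] [InnerProductSpace ℝ Y]

theorem hasDerivAt_half_norm_sq_add_norm_sq {z : ℝ → X} {w : ℝ → Y} {z' : X} {w' : Y} {t : ℝ}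
    (hz : HasDerivAt z z' t) (hw : HasDerivAt w w' t) :
    HasDerivAt (fun s => 1 / 2 * (‖z s‖ ^ 2 + ‖w s‖ ^ 2)) (⟪z t, z'⟫ + ⟪w t, w'⟫) t :=
  ((hz.norm_sq.add hw.norm_sq).const_mul (1 / 2 : ℝ)).congr_deriv (by ring)

theorem half_norm_sq_add_norm_sq_derivs_eq_on_Ici {a t : ℝ} {z z' z'' : ℝ → X}
    {w w' w'' : ℝ → Y} {φd φdd : ℝ → ℝ}
    (hz : ∀ s ∈ Ici a, HasDerivAt z (z' s) s) (hz' : ∀ s ∈ Ici a, HasDerivAt z' (z'' s) s)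
    (hw : ∀ s ∈ Ici a, HasDerivAt w (w' s) s) (hw' : ∀ s ∈ Ici a, HasDerivAt w' (w'' s) s)
    (hφd : ∀ s ∈ Ici a, HasDerivAt (fun s => 1 / 2 * (‖z s‖ ^ 2 + ‖w s‖ ^ 2)) (φd s) s)
    (hφdd : ∀ s ∈ Ici a, HasDerivAt φd (φdd s) s) (ht : t ∈ Ici a) :
    φd t = ⟪z t, z' t⟫ + ⟪w t, w' t⟫ ∧
      φdd t = ‖z' t‖ ^ 2 + ‖w' t‖ ^ 2 + ⟪z t, z'' t⟫ + ⟪w t, w'' t⟫ := by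
  have hφd_eq : EqOn φd (fun s => ⟪z s, z' s⟫ + ⟪w s, w' s⟫) (Ici a) := fun s hs =>
    (hφd s hs).unique (hasDerivAt_half_norm_sq_add_norm_sq (hz s hs) (hw s hs))
  refine ⟨hφd_eq ht, (hφdd t ht).unique_of_eqOn_Ici
    (((hz t ht).inner ℝ (hz' t ht)).add ((hw t ht).inner ℝ (hw' t ht))) hφd_eq ht |>.trans ?_⟩
  rw [real_inner_self_eq_norm_sq, real_inner_self_eq_norm_sq]
  ring

theorem augLagrangian_of_apply_eq (f : X → ℝ) (A : X →L[ℝ] Y) {b : Y} (β : ℝ) {u : X}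
    (hu : A u = b) (μ : Y) : augLagrangian f A b β u μ = f u := by
  simp [augLagrangian, hu]

variable [CompleteSpace X] [CompleteSpace Y]

theorem hasGradientAt_augLagrangian {f : X → ℝ} {g u : X} (hf : HasGradientAt f g u)
    (A : X →L[ℝ] Y) (b : Y) (β : ℝ) (μ : Y) :
    HasGradientAt (fun u => augLagrangian f A b β u μ) (g + (A†) (μ + β • (A u - b))) u := by
  rw [hasGradientAt_iff_hasFDerivAt] at hf ⊢
  have hres : HasFDerivAt (fun u => A u - b) A u := A.hasFDerivAt.sub_const b
  refine ((hf.add ((hasFDerivAt_const μ u).inner ℝ hres)).add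
    (hres.norm_sq.const_mul (β / 2))).congr_fderiv ?_
  ext v
  simp only [add_apply, ContinuousLinearMap.comp_apply,
    ContinuousLinearMap.prod_apply, zero_apply, smul_apply,
    InnerProductSpace.toDual_apply_apply, fderivInnerCLM_apply, innerSL_apply_apply,
    inner_zero_left, inner_add_left, real_inner_smul_left, ContinuousLinearMap.adjoint_inner_left,
    smul_eq_mul, nsmul_eq_mul]
  ring

theorem hasDerivAt_augLagrangian_sub_add_half_norm_sq {f : X → ℝ} {g : X} (A : X →L[ℝ] Y)
    {b : Y} (β : ℝ) {us : X} (hus : A us = b) (μ : Y) {x x' : ℝ → X} {l l' : ℝ → Y}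
    {x'' : X} {l'' : Y} {t : ℝ} (hf : HasGradientAt f g (x t)) (hx : HasDerivAt x (x' t) t)
    (hx' : HasDerivAt x' x'' t) (hl' : HasDerivAt l' l'' t) :
    HasDerivAt (fun s => augLagrangian f A b β (x s) μ - augLagrangian f A b β us (l s)
        + 1 / 2 * (‖x' s‖ ^ 2 + ‖l' s‖ ^ 2))
      (⟪g + (A†) (μ + β • (A (x t) - b)), x' t⟫ + ⟪x' t, x''⟫ + ⟪l' t, l''⟫) t := by
  simp only [augLagrangian_of_apply_eq f A β hus]
  refine ((((hasGradientAt_augLagrangian hf A b β μ).comp_hasDerivAt hx).sub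
    (hasDerivAt_const t (f us))).add
    (hasDerivAt_half_norm_sq_add_norm_sq hx' hl')).congr_deriv ?_
  ring

/-- `φ'' + (α/t) φ' + θ t W'` evaluated at a point of a (PD-AVD) trajectory. -/
theorem pdavd_lyapunov_identity (A : X →L[ℝ] Y) {b : Y} {α β θ t : ℝ} (ht : t ≠ 0)
    {u v a g us gs : X} {l w c ls : Y}
    (hode₁ : a + (α / t) • v + g + (A†) (l + (θ * t) • w) + β • (A†) (A u - b) = 0)
    (hode₂ : c + (α / t) • w - (A (u + (θ * t) • v) - b) = 0)
    (hopt₁ : gs + (A†) ls = 0) (hopt₂ : A us = b) :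
    (‖v‖ ^ 2 + ‖w‖ ^ 2 + ⟪u - us, a⟫ + ⟪l - ls, c⟫) + α / t * (⟪u - us, v⟫ + ⟪l - ls, w⟫)
      + θ * t * (⟪g + (A†) (ls + β • (A u - b)), v⟫ + ⟪v, a⟫ + ⟪w, c⟫)
      = (1 - θ * α) * (‖v‖ ^ 2 + ‖w‖ ^ 2) - ⟪g - gs, u - us⟫ - β * ‖A u - b‖ ^ 2 := by
  have ha : a = -((α / t) • v + g + (A†) (l + (θ * t) • w) + β • (A†) (A u - b)) := by
    linear_combination (norm := module) hode₁
  have hc : c = A (u + (θ * t) • v) - b - (α / t) • w := by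
    linear_combination (norm := module) hode₂
  have hgs : gs = -(A†) ls := by linear_combination (norm := module) hopt₁
  subst ha hc hgs hopt₂
  simp only [← real_inner_self_eq_norm_sq]
  simp only [inner_add_left, inner_add_right, inner_sub_left, inner_sub_right, inner_neg_left,
    inner_neg_right, real_inner_smul_left, real_inner_smul_right,
    ContinuousLinearMap.adjoint_inner_left, ContinuousLinearMap.adjoint_inner_right,
    map_add, map_sub, map_smul]
  simp only [real_inner_comm]
  field_simp
  ring

end PrimalDual

theorem stmt10_general
    {X Y : Type*}
    [NormedAddCommGroup X] [InnerProductSpace ℝ X] [CompleteSpace X]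
    [NormedAddCommGroup Y] [InnerProductSpace ℝ Y] [CompleteSpace Y]
    (f : X → ℝ) (f' : X → X) (A : X →L[ℝ] Y) (b : Y)
    (hconv : ConvexOn ℝ univ f)
    (hgrad : ∀ u, HasGradientAt f (f' u) u)
    (ℓ : NNReal) (hℓ : 0 < ℓ) (hlip : LipschitzWith ℓ f')
    (t₀ α β θ : ℝ) (ht₀ : 0 < t₀) (hα : 3 < α) (hβ : 0 ≤ β)
    (hθ1 : 1 / (α - 1) < θ)
    (x : ℝ → X) (x' x'' : ℝ → X) (l : ℝ → Y) (l' l'' : ℝ → Y)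
    (hx1 : ∀ t ∈ Ici t₀, HasDerivAt x (x' t) t)
    (hx2 : ∀ t ∈ Ici t₀, HasDerivAt x' (x'' t) t)
    (hl1 : ∀ t ∈ Ici t₀, HasDerivAt l (l' t) t)
    (hl2 : ∀ t ∈ Ici t₀, HasDerivAt l' (l'' t) t)
    (hode1 : ∀ t ∈ Ici t₀, x'' t + (α / t) • x' t + f' (x t)
        + (ContinuousLinearMap.adjoint A) (l t + (θ * t) • l' t)
        + β • (ContinuousLinearMap.adjoint A) (A (x t) - b) = 0)
    (hode2 : ∀ t ∈ Ici t₀, l'' t + (α / t) • l' t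
        - (A (x t + (θ * t) • x' t) - b) = 0)
    (xs : X) (ls : Y)
    (hopt1 : f' xs + (ContinuousLinearMap.adjoint A) ls = 0)
    (hopt2 : A xs = b)
    (φd φdd Wd : ℝ → ℝ)
    (hφd : ∀ t ∈ Ici t₀, HasDerivAt
      (fun s => 1 / 2 * (‖x s - xs‖ ^ 2 + ‖l s - ls‖ ^ 2)) (φd t) t)
    (hφdd : ∀ t ∈ Ici t₀, HasDerivAt φd (φdd t) t)
    (hWd : ∀ t ∈ Ici t₀, HasDerivAt
      (fun s => augLagrangian f A b β (x s) ls - augLagrangian f A b β xs (l s)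
        + 1 / 2 * (‖x' s‖ ^ 2 + ‖l' s‖ ^ 2)) (Wd t) t) :
    ∀ t ∈ Ici t₀,
      φdd t + α / t * φd t + θ * t * Wd t
        + 1 / (2 * (ℓ : ℝ)) * ‖f' (x t) - f' xs‖ ^ 2
        + β / 2 * ‖A (x t) - b‖ ^ 2 ≤ 0 := by
  intro t ht
  obtain ⟨hφd_eq, hφdd_eq⟩ := half_norm_sq_add_norm_sq_derivs_eq_on_Ici
    (z := fun s => x s - xs) (w := fun s => l s - ls) (fun s hs => (hx1 s hs).sub_const xs) hx2
    (fun s hs => (hl1 s hs).sub_const ls) hl2 hφd hφdd ht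
  have hWd_eq := (hWd t ht).unique <| hasDerivAt_augLagrangian_sub_add_half_norm_sq A β hopt2 ls
    (hgrad (x t)) (hx1 t ht) (hx2 t ht) (hl2 t ht)
  have hθα : 1 ≤ θ * α := by
    have hα1 : 0 < α - 1 := by linarith
    have hθ : 1 < θ * (α - 1) := (div_lt_iff₀ hα1).1 hθ1
    nlinarith [div_pos one_pos hα1]
  have hid := pdavd_lyapunov_identity A (ht₀.trans_le ht).ne' (hode1 t ht) (hode2 t ht)
    hopt1 hopt2
  have hcoco := hconv.inv_mul_norm_sq_le_inner_of_lipschitzWith hgrad hℓ hlip (x t) xs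
  have hhalf : 1 / (2 * (ℓ : ℝ)) * ‖f' (x t) - f' xs‖ ^ 2
      = (ℓ : ℝ)⁻¹ * ‖f' (x t) - f' xs‖ ^ 2 / 2 := by ring
  rw [hφdd_eq, hφd_eq, hWd_eq, hid, hhalf]
  have hkin : (1 - θ * α) * (‖x' t‖ ^ 2 + ‖l' t‖ ^ 2) ≤ 0 :=
    mul_nonpos_of_nonpos_of_nonneg (by linarith) (by positivity)
  have hgap : 0 ≤ (ℓ : ℝ)⁻¹ * ‖f' (x t) - f' xs‖ ^ 2 := by positivity
  have hres : 0 ≤ β * ‖A (x t) - b‖ ^ 2 := by positivity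
  linarith

theorem stmt10
    {X Y : Type*}
    [NormedAddCommGroup X] [InnerProductSpace ℝ X] [CompleteSpace X]
    [NormedAddCommGroup Y] [InnerProductSpace ℝ Y] [CompleteSpace Y]
    (f : X → ℝ) (f' : X → X) (A : X →L[ℝ] Y) (b : Y)
    (hconv : ConvexOn ℝ univ f)
    (hgrad : ∀ u, HasGradientAt f (f' u) u)
    (hf'cont : Continuous f')
    (ℓ : NNReal) (hℓ : 0 < ℓ) (hlip : LipschitzWith ℓ f')
    (t₀ α β θ : ℝ) (ht₀ : 0 < t₀) (hα : 3 < α) (hβ : 0 ≤ β)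
    (hθ1 : 1 / (α - 1) < θ) (hθ2 : θ < 1 / 2)
    (x : ℝ → X) (x' x'' : ℝ → X) (l : ℝ → Y) (l' l'' : ℝ → Y)
    (hx1 : ∀ t ∈ Ici t₀, HasDerivAt x (x' t) t)
    (hx2 : ∀ t ∈ Ici t₀, HasDerivAt x' (x'' t) t)
    (hx3 : ContinuousOn x'' (Ici t₀))
    (hl1 : ∀ t ∈ Ici t₀, HasDerivAt l (l' t) t)
    (hl2 : ∀ t ∈ Ici t₀, HasDerivAt l' (l'' t) t)
    (hl3 : ContinuousOn l'' (Ici t₀))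
    (hode1 : ∀ t ∈ Ici t₀, x'' t + (α / t) • x' t + f' (x t)
        + (ContinuousLinearMap.adjoint A) (l t + (θ * t) • l' t)
        + β • (ContinuousLinearMap.adjoint A) (A (x t) - b) = 0)
    (hode2 : ∀ t ∈ Ici t₀, l'' t + (α / t) • l' t
        - (A (x t + (θ * t) • x' t) - b) = 0)
    (xs : X) (ls : Y)
    (hopt1 : f' xs + (ContinuousLinearMap.adjoint A) ls = 0)
    (hopt2 : A xs = b)
    (φd φdd Wd : ℝ → ℝ)
    (hφd : ∀ t ∈ Ici t₀, HasDerivAt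
      (fun s => 1 / 2 * (‖x s - xs‖ ^ 2 + ‖l s - ls‖ ^ 2)) (φd t) t)
    (hφdd : ∀ t ∈ Ici t₀, HasDerivAt φd (φdd t) t)
    (hWd : ∀ t ∈ Ici t₀, HasDerivAt
      (fun s => augLagrangian f A b β (x s) ls - augLagrangian f A b β xs (l s)
        + 1 / 2 * (‖x' s‖ ^ 2 + ‖l' s‖ ^ 2)) (Wd t) t) :
    ∀ t ∈ Ici t₀,
      φdd t + α / t * φd t + θ * t * Wd t
        + 1 / (2 * (ℓ : ℝ)) * ‖f' (x t) - f' xs‖ ^ 2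
        + β / 2 * ‖A (x t) - b‖ ^ 2 ≤ 0 :=
  stmt10_general f f' A b hconv hgrad ℓ hℓ hlip t₀ α β θ ht₀ hα hβ hθ1 x x' x'' l l' l'' hx1 hx2 hl1
    hl2 hode1 hode2 xs ls hopt1 hopt2 φd φdd Wd hφd hφdd hWd
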